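/- arXiv:1801.03810 — 2 statements merged into one kernel-verified Lean document; each statement's English description precedes it below -/
import Mathlib

section
/- (Symmetrization lemma) Let p ≥ 2 and let f, g be non-negative functions in L^p(S¹). Then ∫_{-π}^{π} (f² + g²)^{p/2} dσ ≤ ∫_{-π}^{π} ((f*)² + (g*)²)^{p/2} dσ, where f* and g* denote the symmetric decreasing rearrangements of f and g on the circle. -/
open Real MeasureTheory

/-- `fs` is the symmetric decreasing rearrangement on the circle `(-π, π]` of a
non-negative function `f`: it is even, nonincreasing in `|s|`, and
equidistributed with `f` on `(-π, π]`. -/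
def IsSymmDecrRearrangement (f fs : ℝ → ℝ) : Prop :=
  (∀ s, 0 ≤ fs s)
  ∧ (∀ s, fs (-s) = fs s)
  ∧ (∀ s t, 0 ≤ s → s ≤ t → t ≤ π → fs t ≤ fs s)
  ∧ (∀ c : ℝ, volume {s ∈ Set.Ioc (-π) π | c < f s}
      = volume {s ∈ Set.Ioc (-π) π | c < fs s})

/-!
For `q ≥ 1` and `a, b ≥ 0`,
`(a + b)^q = a^q + b^q + ∫∫_{0<s<a, 0<t<b} q(q-1)(s+t)^(q-2) ds dt`.
Applying this with `a = f²`, `b = g²`, `q = p/2` and integrating (Tonelli) expresses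
`∫ (f² + g²)^q` through `∫ f^p`, `∫ g^p` and the measures of the sets `{f² > s} ∩ {g² > t}`.
Rearrangement preserves the first two terms, and it can only enlarge the third: the superlevel
sets of `f*` and `g*` are centred intervals, hence nested, so their intersection has the measure of
the smaller one, which bounds the measure of `{f² > s} ∩ {g² > t}` from above.
-/

open Set ProbabilityTheory
open scoped ENNReal

lemma lintegral_Ioo_ofReal_deriv_eq_sub {F F' : ℝ → ℝ} {a b : ℝ} (hab : a ≤ b)
    (hcont : ContinuousOn F (Icc a b)) (hderiv : ∀ x ∈ Ioo a b, HasDerivAt F (F' x) x)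
    (hF' : ∀ x ∈ Ioo a b, 0 ≤ F' x) :
    ∫⁻ x in Ioo a b, ENNReal.ofReal (F' x) = ENNReal.ofReal (F b - F a) := by
  have hint : IntegrableOn F' (Ioc a b) :=
    intervalIntegral.integrableOn_deriv_of_nonneg hcont hderiv hF'
  rw [← ofReal_integral_eq_lintegral_ofReal (hint.mono_set Ioo_subset_Ioc_self)
      ((ae_restrict_iff' measurableSet_Ioo).2 (ae_of_all _ hF')),
    ← integral_Ioc_eq_integral_Ioo, ← intervalIntegral.integral_of_le hab,
    intervalIntegral.integral_eq_sub_of_hasDerivAt_of_le hab hcont hderiv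
      ((intervalIntegrable_iff_integrableOn_Ioc_of_le hab).2 hint)]

-- The mixed partial derivative `∂²/∂a∂b` of `(a + b)^q`.
noncomputable def rpowAddKernel (q : ℝ) (z : ℝ × ℝ) : ℝ≥0∞ :=
  ENNReal.ofReal (q * (q - 1) * (z.1 + z.2) ^ (q - 2))

lemma measurable_rpowAddKernel (q : ℝ) : Measurable (rpowAddKernel q) := by
  unfold rpowAddKernel; fun_prop

section RpowAdd

variable {q : ℝ}

lemma lintegral_rpowAddKernel_Ioo (hq : 1 ≤ q) {s b : ℝ} (hs : 0 < s) (hb : 0 ≤ b) :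
    ∫⁻ t in Ioo 0 b, rpowAddKernel q (s, t)
      = ENNReal.ofReal (q * (s + b) ^ (q - 1) - q * s ^ (q - 1)) := by
  have h := lintegral_Ioo_ofReal_deriv_eq_sub (F := fun t => q * (s + t) ^ (q - 1))
    (F' := fun t => q * (q - 1) * (s + t) ^ (q - 2)) hb ?_ ?_ ?_
  · rw [add_zero] at h
    exact h
  · exact (continuousOn_const.add continuousOn_id).rpow_const (fun _ _ => Or.inr (by linarith))
      |>.const_smul q
  · intro t ht
    have hst : 0 < s + t := by linarith [ht.1]
    refine ((((hasDerivAt_id t).const_add s).rpow_const (p := q - 1) (Or.inl hst.ne')).const_mul q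
      ).congr_deriv ?_
    rw [id_eq, show q - 1 - 1 = q - 2 by ring]; ring
  · intro t ht
    have : 0 ≤ q * (q - 1) := mul_nonneg (by linarith) (by linarith)
    exact mul_nonneg this (rpow_nonneg (by linarith [ht.1]) _)

lemma setLIntegral_rpowAddKernel_Ioo_prod (hq : 1 ≤ q) {a b : ℝ} (ha : 0 ≤ a) (hb : 0 ≤ b) :
    ∫⁻ z in Ioo 0 a ×ˢ Ioo 0 b, rpowAddKernel q z
      = ENNReal.ofReal ((a + b) ^ q - a ^ q - b ^ q) := by
  rw [Measure.volume_eq_prod, setLIntegral_prod _ (measurable_rpowAddKernel q).aemeasurable,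
    setLIntegral_congr_fun measurableSet_Ioo (fun s hs => lintegral_rpowAddKernel_Ioo hq hs.1 hb)]
  have h := lintegral_Ioo_ofReal_deriv_eq_sub (F := fun s => (s + b) ^ q - s ^ q)
    (F' := fun s => q * (s + b) ^ (q - 1) - q * s ^ (q - 1)) ha ?_ ?_ ?_
  · rw [h, zero_rpow (by linarith)]
    ring_nf
  · exact ((continuousOn_id.add continuousOn_const).rpow_const fun _ _ => Or.inr (by linarith)).sub
      (continuousOn_id.rpow_const fun _ _ => Or.inr (by linarith))
  · intro s _
    exact (((hasDerivAt_id s).add_const b).rpow_const (Or.inr hq)).sub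
      ((hasDerivAt_id s).rpow_const (Or.inr hq)) |>.congr_deriv (by simp)
  · intro s hs
    have := rpow_le_rpow hs.1.le (le_add_of_nonneg_right hb) (by linarith : 0 ≤ q - 1)
    nlinarith

lemma ofReal_rpow_add_eq (hq : 1 ≤ q) {a b : ℝ} (ha : 0 ≤ a) (hb : 0 ≤ b) :
    ENNReal.ofReal ((a + b) ^ q) = ENNReal.ofReal (a ^ q) + ENNReal.ofReal (b ^ q)
      + ∫⁻ z in Ioi 0 ×ˢ Ioi 0, (Iio a ×ˢ Iio b).indicator (rpowAddKernel q) z := by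
  rw [lintegral_indicator (measurableSet_Iio.prod measurableSet_Iio),
    Measure.restrict_restrict (measurableSet_Iio.prod measurableSet_Iio), prod_inter_prod,
    Iio_inter_Ioi, Iio_inter_Ioi, setLIntegral_rpowAddKernel_Ioo_prod hq ha hb,
    ← ENNReal.ofReal_add (by positivity) (by positivity),
    ← ENNReal.ofReal_add (by positivity) (by linarith [add_rpow_le_rpow_add ha hb hq])]
  ring_nf

variable {α : Type*} [MeasurableSpace α]

theorem lintegral_ofReal_rpow_add (μ : Measure α) [SFinite μ] (hq : 1 ≤ q) {F G : α → ℝ}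
    (hF : Measurable F) (hG : Measurable G) (hF0 : ∀ x, 0 ≤ F x) (hG0 : ∀ x, 0 ≤ G x) :
    ∫⁻ x, ENNReal.ofReal ((F x + G x) ^ q) ∂μ
      = ∫⁻ x, ENNReal.ofReal (F x ^ q) ∂μ + ∫⁻ x, ENNReal.ofReal (G x ^ q) ∂μ
        + ∫⁻ z in Ioi 0 ×ˢ Ioi 0, rpowAddKernel q z * μ {x | z.1 < F x ∧ z.2 < G x} := by
  set S : Set (α × (ℝ × ℝ)) := {w | w.2.1 < F w.1 ∧ w.2.2 < G w.1}
  have hS : MeasurableSet S :=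
    (measurableSet_lt measurable_snd.fst (hF.comp measurable_fst)).inter
      (measurableSet_lt measurable_snd.snd (hG.comp measurable_fst))
  have hH : Measurable (S.indicator fun w => rpowAddKernel q w.2) :=
    ((measurable_rpowAddKernel q).comp measurable_snd).indicator hS
  calc ∫⁻ x, ENNReal.ofReal ((F x + G x) ^ q) ∂μ
      = ∫⁻ x, (ENNReal.ofReal (F x ^ q) + ENNReal.ofReal (G x ^ q)
          + ∫⁻ z in Ioi 0 ×ˢ Ioi 0, S.indicator (fun w => rpowAddKernel q w.2) (x, z)) ∂μ :=
        lintegral_congr fun x => ofReal_rpow_add_eq hq (hF0 x) (hG0 x)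
    _ = ∫⁻ x, ENNReal.ofReal (F x ^ q) ∂μ + ∫⁻ x, ENNReal.ofReal (G x ^ q) ∂μ
          + ∫⁻ z in Ioi 0 ×ˢ Ioi 0, ∫⁻ x, S.indicator (fun w => rpowAddKernel q w.2) (x, z) ∂μ := by
        rw [lintegral_add_right _ hH.lintegral_prod_right',
          lintegral_add_left (hF.pow_const q).ennreal_ofReal,
          lintegral_lintegral_swap
            (f := fun x z => S.indicator (fun w => rpowAddKernel q w.2) (x, z)) hH.aemeasurable]
    _ = _ := by
        congr 1
        refine lintegral_congr fun z => ?_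
        change ∫⁻ x, ((·, z) ⁻¹' S).indicator (fun _ => rpowAddKernel q z) x ∂μ = _
        rw [lintegral_indicator_const (hS.preimage measurable_prodMk_right)]
        rfl

lemma measure_superlevel_inter_le {μ : Measure α} {F G F' G' : α → ℝ}
    (hF : IdentDistrib F F' μ μ) (hG : IdentDistrib G G' μ μ) {c d : ℝ}
    (hnest : {x | c < F' x} ⊆ {x | d < G' x} ∨ {x | d < G' x} ⊆ {x | c < F' x}) :
    μ {x | c < F x ∧ d < G x} ≤ μ {x | c < F' x ∧ d < G' x} := by
  rcases hnest with h | h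
  · calc μ {x | c < F x ∧ d < G x} ≤ μ {x | c < F x} := measure_mono fun x hx => hx.1
      _ = μ {x | c < F' x} := hF.measure_mem_eq measurableSet_Ioi
      _ = μ {x | c < F' x ∧ d < G' x} :=
        congrArg μ (ext fun _ => ⟨fun hx => ⟨hx, h hx⟩, And.left⟩)
  · calc μ {x | c < F x ∧ d < G x} ≤ μ {x | d < G x} := measure_mono fun x hx => hx.2
      _ = μ {x | d < G' x} := hG.measure_mem_eq measurableSet_Ioi
      _ = μ {x | c < F' x ∧ d < G' x} :=
        congrArg μ (ext fun _ => ⟨fun hx => ⟨h hx, hx⟩, And.right⟩)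

theorem lintegral_ofReal_rpow_add_le (μ : Measure α) [SFinite μ] (hq : 1 ≤ q)
    {F G F' G' : α → ℝ} (hFm : Measurable F) (hGm : Measurable G) (hF'm : Measurable F')
    (hG'm : Measurable G') (hF0 : ∀ x, 0 ≤ F x) (hG0 : ∀ x, 0 ≤ G x) (hF'0 : ∀ x, 0 ≤ F' x)
    (hG'0 : ∀ x, 0 ≤ G' x) (hF : IdentDistrib F F' μ μ) (hG : IdentDistrib G G' μ μ)
    (hnest : ∀ c d, {x | c < F' x} ⊆ {x | d < G' x} ∨ {x | d < G' x} ⊆ {x | c < F' x}) :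
    ∫⁻ x, ENNReal.ofReal ((F x + G x) ^ q) ∂μ ≤ ∫⁻ x, ENNReal.ofReal ((F' x + G' x) ^ q) ∂μ := by
  have hpow : Measurable fun y : ℝ => ENNReal.ofReal (y ^ q) := by fun_prop
  have hFq : ∫⁻ x, ENNReal.ofReal (F x ^ q) ∂μ = ∫⁻ x, ENNReal.ofReal (F' x ^ q) ∂μ :=
    (hF.comp hpow).lintegral_eq
  have hGq : ∫⁻ x, ENNReal.ofReal (G x ^ q) ∂μ = ∫⁻ x, ENNReal.ofReal (G' x ^ q) ∂μ :=
    (hG.comp hpow).lintegral_eq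
  rw [lintegral_ofReal_rpow_add μ hq hFm hGm hF0 hG0,
    lintegral_ofReal_rpow_add μ hq hF'm hG'm hF'0 hG'0, hFq, hGq]
  gcongr _ + ∫⁻ z in _, _ * ?_ with z
  exact measure_superlevel_inter_le hF hG (hnest z.1 z.2)

end RpowAdd

lemma superlevel_comp_subset_total {α β : Type*} [LinearOrder β] (a : α → β) {φ ψ : β → ℝ}
    (hφ : Antitone φ) (hψ : Antitone ψ) (c d : ℝ) :
    {x | c < φ (a x)} ⊆ {x | d < ψ (a x)} ∨ {x | d < ψ (a x)} ⊆ {x | c < φ (a x)} := by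
  have hlower : ∀ {χ : β → ℝ}, Antitone χ → ∀ e, IsLowerSet {u | e < χ u} :=
    fun hχ _ _ _ huv hv => hv.trans_le (hχ huv)
  exact ((hlower hφ c).total (hlower hψ d)).imp (preimage_mono (f := a)) (preimage_mono (f := a))

section Measure

variable {α : Type*} [MeasurableSpace α]

lemma identDistrib_of_measure_superlevel_eq {μ : Measure α} [IsFiniteMeasure μ] {f h : α → ℝ}
    (hf : Measurable f) (hh : Measurable h) (heq : ∀ c, μ {x | c < f x} = μ {x | c < h x}) :
    IdentDistrib f h μ μ where
  aemeasurable_fst := hf.aemeasurable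
  aemeasurable_snd := hh.aemeasurable
  map_eq := by
    refine ext_of_generate_finite _ (borel_eq_generateFrom_Ioi ℝ) isPiSystem_Ioi ?_ ?_
    · rintro _ ⟨c, rfl⟩
      rw [Measure.map_apply hf measurableSet_Ioi, Measure.map_apply hh measurableSet_Ioi]
      exact heq c
    · rw [Measure.map_apply hf MeasurableSet.univ, Measure.map_apply hh MeasurableSet.univ]
      rfl

lemma integral_le_integral_of_lintegral_ofReal_le {μ : Measure α} {f g : α → ℝ}
    (hf : AEStronglyMeasurable f μ) (hf0 : 0 ≤ᵐ[μ] f) (hg : Integrable g μ) (hg0 : 0 ≤ᵐ[μ] g)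
    (h : ∫⁻ x, ENNReal.ofReal (f x) ∂μ ≤ ∫⁻ x, ENNReal.ofReal (g x) ∂μ) :
    ∫ x, f x ∂μ ≤ ∫ x, g x ∂μ := by
  rw [integral_eq_lintegral_of_nonneg_ae hf0 hf, integral_eq_lintegral_of_nonneg_ae hg0 hg.1]
  exact ENNReal.toReal_mono hg.lintegral_lt_top.ne h

end Measure

namespace IsSymmDecrRearrangement

variable {f fs : ℝ → ℝ}

lemma exists_antitone_comp_abs (h : IsSymmDecrRearrangement f fs) :
    ∃ φ : ℝ → ℝ, Antitone φ ∧ (∀ u, 0 ≤ φ u) ∧ EqOn fs (fun x => φ |x|) (Icc (-π) π) := by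
  obtain ⟨hfs0, hfs_even, hfs_anti, -⟩ := h
  refine ⟨fun u => fs (projIcc 0 π pi_pos.le u), fun u v huv => ?_, fun u => hfs0 _, ?_⟩
  · exact hfs_anti _ _ (projIcc 0 π _ u).2.1 (monotone_projIcc _ huv) (projIcc 0 π _ v).2.2
  · intro x hx
    have hmem : |x| ∈ Icc 0 π := ⟨abs_nonneg x, abs_le.2 hx⟩
    simp only [projIcc_of_mem _ hmem]
    rcases abs_choice x with hx' | hx' <;> simp [hx', hfs_even]

lemma identDistrib_comp_abs (h : IsSymmDecrRearrangement f fs) (hf : Measurable f)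
    {φ : ℝ → ℝ} (hφ : Antitone φ) (hfsφ : EqOn fs (fun x => φ |x|) (Icc (-π) π)) :
    IdentDistrib f (fun x => φ |x|) (volume.restrict (Ioc (-π) π))
      (volume.restrict (Ioc (-π) π)) := by
  refine identDistrib_of_measure_superlevel_eq hf (hφ.measurable.comp measurable_abs) fun c => ?_
  rw [Measure.restrict_apply' measurableSet_Ioc, Measure.restrict_apply' measurableSet_Ioc,
    inter_comm, inter_comm {x | c < φ |x|}]
  refine (h.2.2.2 c).trans (congrArg volume (ext fun x => and_congr_right fun hx => ?_))
  rw [mem_ofPred_eq, hfsφ (Ioc_subset_Icc_self hx)]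

end IsSymmDecrRearrangement

lemma Antitone.sq_of_nonneg {β : Type*} [Preorder β] {φ : β → ℝ} (hφ : Antitone φ)
    (hφ0 : ∀ u, 0 ≤ φ u) : Antitone fun u => φ u ^ 2 :=
  fun _ v huv => pow_le_pow_left₀ (hφ0 v) (hφ huv) 2

lemma integrable_rpow_sq_add_sq_comp_abs {μ : Measure ℝ} [IsFiniteMeasure μ] {φ ψ : ℝ → ℝ}
    (hφ : Antitone φ) (hψ : Antitone ψ) (hφ0 : ∀ u, 0 ≤ φ u) (hψ0 : ∀ u, 0 ≤ ψ u) {r : ℝ}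
    (hr : 0 ≤ r) : Integrable (fun x => (φ |x| ^ 2 + ψ |x| ^ 2) ^ r) μ := by
  have hφm := hφ.measurable
  have hψm := hψ.measurable
  refine Integrable.of_bound (Measurable.aestronglyMeasurable (by fun_prop))
    ((φ 0 ^ 2 + ψ 0 ^ 2) ^ r) (ae_of_all _ fun x => ?_)
  rw [norm_of_nonneg (by positivity)]
  have := hφ.sq_of_nonneg hφ0 (abs_nonneg x)
  have := hψ.sq_of_nonneg hψ0 (abs_nonneg x)
  gcongr

theorem symmetrization_lemma_general (p : ℝ) (hp : 2 ≤ p)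
    (f g fs gs : ℝ → ℝ) (hf : Measurable f) (hg : Measurable g)
    (hfs : IsSymmDecrRearrangement f fs) (hgs : IsSymmDecrRearrangement g gs) :
    (1 / (2 * π)) * ∫ s in (-π)..π, (f s ^ 2 + g s ^ 2) ^ (p / 2)
      ≤ (1 / (2 * π)) * ∫ s in (-π)..π, (fs s ^ 2 + gs s ^ 2) ^ (p / 2) := by
  set μ := volume.restrict (Ioc (-π) π)
  obtain ⟨φ, hφ, hφ0, hfsφ⟩ := hfs.exists_antitone_comp_abs
  obtain ⟨ψ, hψ, hψ0, hgsψ⟩ := hgs.exists_antitone_comp_abs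
  have hsq : Measurable fun y : ℝ => y ^ 2 := by fun_prop
  have hφm := hφ.measurable
  have hψm := hψ.measurable
  have key := lintegral_ofReal_rpow_add_le μ (q := p / 2) (by linarith)
    (by fun_prop) (by fun_prop) (by fun_prop) (by fun_prop)
    (fun _ => sq_nonneg _) (fun _ => sq_nonneg _) (fun _ => sq_nonneg _) (fun _ => sq_nonneg _)
    ((hfs.identDistrib_comp_abs hf hφ hfsφ).comp hsq)
    ((hgs.identDistrib_comp_abs hg hψ hgsψ).comp hsq)
    (superlevel_comp_subset_total abs (hφ.sq_of_nonneg hφ0) (hψ.sq_of_nonneg hψ0))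
  have hrhs : ∫ x in Ioc (-π) π, (fs x ^ 2 + gs x ^ 2) ^ (p / 2)
      = ∫ x in Ioc (-π) π, (φ |x| ^ 2 + ψ |x| ^ 2) ^ (p / 2) :=
    setIntegral_congr_fun measurableSet_Ioc fun x hx => by
      rw [hfsφ (Ioc_subset_Icc_self hx), hgsψ (Ioc_subset_Icc_self hx)]
  rw [intervalIntegral.integral_of_le (by linarith [pi_pos]),
    intervalIntegral.integral_of_le (by linarith [pi_pos]), hrhs]
  refine mul_le_mul_of_nonneg_left (integral_le_integral_of_lintegral_ofReal_le
    (Measurable.aestronglyMeasurable (by fun_prop)) ?_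
    (integrable_rpow_sq_add_sq_comp_abs hφ hψ hφ0 hψ0 (by linarith)) ?_ key) (by positivity)
  all_goals exact ae_of_all _ fun _ => rpow_nonneg (by positivity) _

/-- symmetrization lemma: for `p ≥ 2` and non-negative
`f, g ∈ L^p(S¹)`, `∫ (f²+g²)^{p/2} dσ ≤ ∫ ((f*)²+(g*)²)^{p/2} dσ`. -/
theorem symmetrization_lemma (p : ℝ) (hp : 2 ≤ p)
    (f g fs gs : ℝ → ℝ) (hf : Measurable f) (hg : Measurable g)
    (hf0 : ∀ s, 0 ≤ f s) (hg0 : ∀ s, 0 ≤ g s)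
    (hfLp : IntervalIntegrable (fun s => f s ^ p) volume (-π) π)
    (hgLp : IntervalIntegrable (fun s => g s ^ p) volume (-π) π)
    (hfs : IsSymmDecrRearrangement f fs) (hgs : IsSymmDecrRearrangement g gs) :
    (1 / (2 * π)) * ∫ s in (-π)..π, (f s ^ 2 + g s ^ 2) ^ (p / 2)
      ≤ (1 / (2 * π)) * ∫ s in (-π)..π, (fs s ^ 2 + gs s ^ 2) ^ (p / 2) :=
  symmetrization_lemma_general p hp f g fs gs hf hg hfs hgs
end

section
/- (Wronskian rigidity) Let p > 2, α ∈ ℝ, and let v₁, v₂: ℝ → ℝ be C² functions both satisfying -v_j'' + α v_j = (v₁² + v₂²)^{p/2 - 1} v_j on ℝ. Then the Wronskian w = v₁ v₂' - v₁' v₂ is constant. Moreover, if v₁ and v₂ both vanish at some common point and are not identically zero, then w ≡ 0 and v₁, v₂ are linearly dependent. -/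
/-!
Both `v₁` and `v₂` solve the *linear* equation `u'' = g u` with the same potential
`g = α - (v₁² + v₂²)^(p/2 - 1)`, which is continuous because `p > 2`. Abel's identity makes the
Wronskian constant, so it vanishes identically once `v₁, v₂` vanish at a common point `s₀`.
The combination `v₂'(s₀) v₁ - v₁'(s₀) v₂` solves the same linear equation with zero Cauchy data at
`s₀`, hence is identically zero by uniqueness for linear ODEs; its coefficients are not both zero
since `v₂ ≢ 0` forces `v₂'(s₀) ≠ 0`, again by uniqueness.
-/

open Set

noncomputable def wronskian (u v : ℝ → ℝ) (s : ℝ) : ℝ := u s * deriv v s - deriv u s * v s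

theorem lipschitzWith_snd_prod_const_mul_fst (c : ℝ) :
    LipschitzWith (max 1 ‖c‖₊) (fun y : ℝ × ℝ => (y.2, c * y.1)) := by
  have h := LipschitzWith.prod_snd.prodMk ((lipschitzWith_smul (β := ℝ) c).comp
    (LipschitzWith.prod_fst (α := ℝ) (β := ℝ)))
  rw [mul_one] at h
  exact h

structure SolvesLinearODE (g u : ℝ → ℝ) : Prop where
  differentiable : Differentiable ℝ u
  differentiable_deriv : Differentiable ℝ (deriv u)
  deriv_deriv : ∀ s, deriv (deriv u) s = g s * u s

namespace SolvesLinearODE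

variable {g u v : ℝ → ℝ}

theorem of_contDiff (hu : ContDiff ℝ 2 u) (h : ∀ s, deriv (deriv u) s = g s * u s) :
    SolvesLinearODE g u :=
  ⟨hu.differentiable two_ne_zero, hu.differentiable_deriv_two, h⟩

theorem const_mul_add_const_mul (hu : SolvesLinearODE g u) (hv : SolvesLinearODE g v) (a b : ℝ) :
    SolvesLinearODE g (fun s => a * u s + b * v s) := by
  have hderiv : deriv (fun s => a * u s + b * v s) = fun s => a * deriv u s + b * deriv v s := by
    funext s
    exact (((hu.differentiable s).hasDerivAt.const_mul a).fun_add
      ((hv.differentiable s).hasDerivAt.const_mul b)).deriv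
  refine ⟨(hu.differentiable.const_mul a).add (hv.differentiable.const_mul b), ?_, fun s => ?_⟩
  · rw [hderiv]
    exact (hu.differentiable_deriv.const_mul a).add (hv.differentiable_deriv.const_mul b)
  · have h := ((hu.differentiable_deriv s).hasDerivAt.const_mul a).fun_add
      ((hv.differentiable_deriv s).hasDerivAt.const_mul b)
    rw [hderiv, h.deriv, hu.deriv_deriv, hv.deriv_deriv]
    ring

theorem hasDerivAt_wronskian (hu : SolvesLinearODE g u) (hv : SolvesLinearODE g v) (s : ℝ) :
    HasDerivAt (wronskian u v) 0 s := by
  refine (((hu.differentiable s).hasDerivAt.mul (hv.differentiable_deriv s).hasDerivAt).sub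
    ((hu.differentiable_deriv s).hasDerivAt.mul (hv.differentiable s).hasDerivAt)).congr_deriv ?_
  rw [hu.deriv_deriv, hv.deriv_deriv]
  ring

theorem wronskian_eq (hu : SolvesLinearODE g u) (hv : SolvesLinearODE g v) (s t : ℝ) :
    wronskian u v s = wronskian u v t :=
  is_const_of_deriv_eq_zero (fun t => (hasDerivAt_wronskian hu hv t).differentiableAt)
    (fun t => (hasDerivAt_wronskian hu hv t).deriv) s t

theorem eq_zero_of_eq_zero_of_deriv_eq_zero (hg : Continuous g) (hu : SolvesLinearODE g u)
    {s₀ : ℝ} (h0 : u s₀ = 0) (h1 : deriv u s₀ = 0) : u = 0 := by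
  ext t
  obtain ⟨a, b, ht, hs₀⟩ : ∃ a b, t ∈ Ioo a b ∧ s₀ ∈ Ioo a b :=
    ⟨min t s₀ - 1, max t s₀ + 1, by grind⟩
  obtain ⟨C, hC⟩ := (isCompact_Icc (a := a) (b := b)).exists_bound_of_continuousOn hg.continuousOn
  -- Uniqueness for the first-order system `(u, u')' = (u', g u)`, Lipschitz on `(a, b)`.
  have hlip : ∀ τ ∈ Ioo a b,
      LipschitzOnWith (max 1 C.toNNReal) (fun y : ℝ × ℝ => (y.2, g τ * y.1)) univ := by
    intro τ hτ
    refine ((lipschitzWith_snd_prod_const_mul_fst (g τ)).weaken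
      (max_le_max le_rfl ?_)).lipschitzOnWith
    rw [← NNReal.coe_le_coe, coe_nnnorm]
    exact (hC τ (Ioo_subset_Icc_self hτ)).trans (Real.le_coe_toNNReal C)
  have hsol : ∀ τ ∈ Ioo a b, HasDerivAt (fun τ => (u τ, deriv u τ))
      (deriv u τ, g τ * u τ) τ ∧ (u τ, deriv u τ) ∈ univ := fun τ _ =>
    ⟨hu.deriv_deriv τ ▸ (hu.differentiable τ).hasDerivAt.prodMk
      (hu.differentiable_deriv τ).hasDerivAt, trivial⟩
  have hzero : ∀ τ ∈ Ioo a b, HasDerivAt (fun _ => (0 : ℝ × ℝ))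
      ((0 : ℝ × ℝ).2, g τ * (0 : ℝ × ℝ).1) τ ∧ (0 : ℝ × ℝ) ∈ univ := fun τ _ =>
    ⟨(hasDerivAt_const τ (0 : ℝ × ℝ)).congr_deriv (by ext <;> simp), trivial⟩
  exact congrArg Prod.fst
    (ODE_solution_unique_of_mem_Ioo hlip hs₀ hsol hzero (by simp [h0, h1]) ht)

theorem exists_linear_dependence (hg : Continuous g) (hu : SolvesLinearODE g u)
    (hv : SolvesLinearODE g v) {s₀ : ℝ} (hu₀ : u s₀ = 0) (hv₀ : v s₀ = 0) (hv_ne : v ≠ 0) :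
    ∃ c₁ c₂ : ℝ, (c₁, c₂) ≠ (0, 0) ∧ ∀ s, c₁ * u s + c₂ * v s = 0 := by
  refine ⟨deriv v s₀, -deriv u s₀, fun h => hv_ne ?_, fun s => ?_⟩
  · exact hv.eq_zero_of_eq_zero_of_deriv_eq_zero hg hv₀ (congrArg Prod.fst h)
  have hderiv := ((hu.differentiable s₀).hasDerivAt.const_mul (deriv v s₀)).fun_add
    ((hv.differentiable s₀).hasDerivAt.const_mul (-deriv u s₀))
  refine congrFun ((hu.const_mul_add_const_mul hv _ _).eq_zero_of_eq_zero_of_deriv_eq_zero hg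
    (s₀ := s₀) (by simp [hu₀, hv₀]) ?_) s
  rw [hderiv.deriv]
  ring

end SolvesLinearODE

/-- Wronskian rigidity: if `v₁, v₂` are `C²` solutions of the same
semilinear ODE `-v'' + α v = (v₁²+v₂²)^{p/2-1} v`, then the Wronskian
`w = v₁ v₂' - v₁' v₂` is constant; if moreover `v₁, v₂` vanish at a common point
and are not identically zero, then `w ≡ 0` and `v₁, v₂` are linearly dependent. -/
theorem wronskian_rigidity (p α : ℝ) (hp : 2 < p) (v₁ v₂ : ℝ → ℝ)
    (hv₁ : ContDiff ℝ 2 v₁) (hv₂ : ContDiff ℝ 2 v₂)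
    (hode₁ : ∀ s : ℝ, -(deriv (deriv v₁) s) + α * v₁ s
      = ((v₁ s) ^ 2 + (v₂ s) ^ 2) ^ (p / 2 - 1) * v₁ s)
    (hode₂ : ∀ s : ℝ, -(deriv (deriv v₂) s) + α * v₂ s
      = ((v₁ s) ^ 2 + (v₂ s) ^ 2) ^ (p / 2 - 1) * v₂ s) :
    (∃ c : ℝ, ∀ s : ℝ, v₁ s * deriv v₂ s - deriv v₁ s * v₂ s = c)
    ∧ ((∃ s₀ : ℝ, v₁ s₀ = 0 ∧ v₂ s₀ = 0) → v₁ ≠ 0 → v₂ ≠ 0 →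
      (∀ s : ℝ, v₁ s * deriv v₂ s - deriv v₁ s * v₂ s = 0)
      ∧ ∃ c₁ c₂ : ℝ, (c₁, c₂) ≠ (0, 0) ∧ ∀ s : ℝ, c₁ * v₁ s + c₂ * v₂ s = 0) := by
  obtain ⟨g, hg_def⟩ : ∃ g : ℝ → ℝ, g = fun s => α - (v₁ s ^ 2 + v₂ s ^ 2) ^ (p / 2 - 1) :=
    ⟨_, rfl⟩
  have hg : Continuous g := hg_def ▸ continuous_const.sub
    (((hv₁.continuous.pow 2).add (hv₂.continuous.pow 2)).rpow_const
      fun _ => Or.inr (by linarith))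
  have hsol₁ : SolvesLinearODE g v₁ :=
    .of_contDiff hv₁ fun s => by rw [hg_def]; linear_combination -hode₁ s
  have hsol₂ : SolvesLinearODE g v₂ :=
    .of_contDiff hv₂ fun s => by rw [hg_def]; linear_combination -hode₂ s
  refine ⟨⟨wronskian v₁ v₂ 0, fun s => hsol₁.wronskian_eq hsol₂ s 0⟩, ?_⟩
  rintro ⟨s₀, h₁, h₂⟩ - hv₂_ne
  refine ⟨fun s => ?_, hsol₁.exists_linear_dependence hg hsol₂ h₁ h₂ hv₂_ne⟩
  change wronskian v₁ v₂ s = 0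
  rw [hsol₁.wronskian_eq hsol₂ s s₀, wronskian, h₁, h₂]
  ring
end
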